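/- arXiv:0807.2205 — 2 statements merged into one kernel-verified Lean document; each statement's English description precedes it below -/
import Mathlib

section
/- Assume (H1): for every transfinite sequence (X_ξ)_{ξ<ω₁} of block subspaces that is ⊆*-decreasing (i.e., X_ζ ⊆* X_ξ whenever ξ < ζ < ω₁) there is a block subspace Y with Y ⊆* X_ξ for all ξ < ω₁; and (H2): for every countable set D and every family (f_ξ)_{ξ<ω₁} of functions f_ξ : D → ℕ there is a function g : D → ℕ such that for each ξ < ω₁, f_ξ(d) ≤ g(d) for all but finitely many d ∈ D. Then the union of any family of ℵ₁ many strategically Ramsey subsets of E^∞ is strategically Ramsey. (Both (H1) and (H2) are consequences of Martin's Axiom MA_{ω₁}, under which the paper states this theorem.) -/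
section Defs

variable {𝔽 : Type} [Field 𝔽] {E : Type} [AddCommGroup E] [Module 𝔽 E]

/-- The support of a vector with respect to the basis `b`. -/
noncomputable def supp (b : Module.Basis ℕ 𝔽 E) (x : E) : Finset ℕ :=
  (b.repr x).support

/-- `VecLt b x y` means `x < y`: every element of the support of `x` is smaller than
every element of the support of `y`. -/
def VecLt (b : Module.Basis ℕ 𝔽 E) (x y : E) : Prop :=
  ∀ m ∈ supp b x, ∀ n ∈ supp b y, m < n

/-- `NatLt b k x` means `k < x`: `k` is smaller than every element of the support of `x`. -/
def NatLt (b : Module.Basis ℕ 𝔽 E) (k : ℕ) (x : E) : Prop :=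
  ∀ n ∈ supp b x, k < n

/-- An infinite block sequence: a sequence of nonzero vectors with `x n < x (n + 1)`. -/
def IsBlockSeq (b : Module.Basis ℕ 𝔽 E) (x : ℕ → E) : Prop :=
  (∀ n, x n ≠ 0) ∧ ∀ n, VecLt b (x n) (x (n + 1))

/-- A finite block sequence: a list of nonzero vectors, consecutively increasing in the
block ordering. -/
def IsFinBlockSeq (b : Module.Basis ℕ 𝔽 E) (l : List E) : Prop :=
  (∀ x ∈ l, x ≠ 0) ∧ l.Chain' (VecLt b)

/-- A block subspace: a subspace spanned by an infinite block sequence. -/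
def IsBlockSubspace (b : Module.Basis ℕ 𝔽 E) (X : Submodule 𝔽 E) : Prop :=
  ∃ y : ℕ → E, IsBlockSeq b y ∧ X = Submodule.span 𝔽 (Set.range y)

/-- The list of the first `n` values of a sequence. -/
def hist {α : Type _} (x : ℕ → α) (n : ℕ) : List α :=
  List.ofFn (fun j : Fin n => x j)

/-- The concatenation of a finite prefix with an infinite sequence. -/
def prefCat {α : Type _} (l : List α) (x : ℕ → α) : ℕ → α := fun n =>
  if h : n < l.length then l.get ⟨n, h⟩ else x (n - l.length)

/-- Player II has a strategy in Gowers' game `G_X(pre)` below `X` to play in `A`: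
player I plays infinite-dimensional subspaces `Y i ≤ X`, player II answers with a
nonzero vector of `Y i`, the vectors played by II forming a block sequence, and the
outcome (the prefix `pre` followed by II's vectors) lies in `A`. -/
def IIWinsG (b : Module.Basis ℕ 𝔽 E) (X : Submodule 𝔽 E) (pre : List E) (A : Set (ℕ → E)) :
    Prop :=
  ∃ σ : List (Submodule 𝔽 E) → E,
    ∀ Y : ℕ → Submodule 𝔽 E,
      (∀ i, Y i ≤ X ∧ ¬FiniteDimensional 𝔽 ↥(Y i)) →
      (∀ i, σ (hist Y (i + 1)) ∈ Y i ∧ σ (hist Y (i + 1)) ≠ 0 ∧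
          VecLt b (σ (hist Y (i + 1))) (σ (hist Y (i + 2)))) ∧
        prefCat pre (fun i => σ (hist Y (i + 1))) ∈ A

/-- Player I has a strategy in the infinite asymptotic game `F_X(pre)` below `X` to play
in `A`: player I plays strictly increasing natural numbers `n i`, player II answers with
nonzero vectors of `X` with `n i < x i` forming a block sequence, and the outcome
(the prefix `pre` followed by II's vectors) lies in `A`. -/
def IWinsF (b : Module.Basis ℕ 𝔽 E) (X : Submodule 𝔽 E) (pre : List E) (A : Set (ℕ → E)) :
    Prop :=
  ∃ σ : List E → ℕ,
    ∀ x : ℕ → E,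
      (∀ i, x i ∈ X ∧ x i ≠ 0 ∧ NatLt b (σ (hist x i)) (x i) ∧
          VecLt b (x i) (x (i + 1))) →
      (∀ i, σ (hist x i) < σ (hist x (i + 1))) ∧ prefCat pre x ∈ A

/-- A set `A ⊆ E^∞` is strategically Ramsey if for every block subspace `V` and every
finite block sequence `z`, there is a block subspace `W ≤ V` such that either II has a
strategy in `G_W(z)` to play in `A`, or I has a strategy in `F_W(z)` to play in `Aᶜ`. -/
def StrategicallyRamsey (b : Module.Basis ℕ 𝔽 E) (A : Set (ℕ → E)) : Prop :=
  ∀ V : Submodule 𝔽 E, IsBlockSubspace b V → ∀ z : List E, IsFinBlockSeq b z →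
    ∃ W : Submodule 𝔽 E, W ≤ V ∧ IsBlockSubspace b W ∧
      (IIWinsG b W z A ∨ IWinsF b W z Aᶜ)

/-- `Y ⊆* X`: `Y` is spanned by an infinite block sequence all but finitely many of
whose terms belong to `X`. -/
def SubsetStar (b : Module.Basis ℕ 𝔽 E) (Y X : Submodule 𝔽 E) : Prop :=
  ∃ y : ℕ → E, IsBlockSeq b y ∧ Y = Submodule.span 𝔽 (Set.range y) ∧
    ∃ N : ℕ, ∀ m, N ≤ m → y m ∈ X

end Defs

/-!
Fix `V`, `z` and put `U = ⋃ ξ, A ξ`. A countable fusion gives `W ⊆* V` that decides every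
position `p`: either II wins `G_W(p)` into `U`, or `W` rejects `p`, i.e. II wins `G_Z(p)` into
`U` for no `Z ⊆* W`. If `W` does not reject `z` we are in case (a). Otherwise a second fusion
makes rejection propagate: at a rejected `p`, every sufficiently high one-step extension is
rejected again. At a rejected block position II cannot win into `A ξ ⊆ U`, so, `A ξ` being
strategically Ramsey, I wins `F(p)` into `(A ξ)ᶜ` below some subspace; fusing over the countably
many positions, and then over `ξ < ω₁` using (H1), yields one subspace carrying all these
strategies. There I wins `F(z)` into `Uᶜ` by staying in rejected positions and playing above
a bound which by (H2) eventually dominates, along the play, the strategies for each `(A ξ)ᶜ`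
started at earlier positions: an outcome in `A ξ` would then have a tail that is a play lost by
I's strategy for `(A ξ)ᶜ` from a rejected position.
-/

section Lists

variable {α : Type*}

@[simp]
lemma hist_length (x : ℕ → α) (n : ℕ) : (hist x n).length = n := by
  simp [hist]

lemma hist_add (x : ℕ → α) (m k : ℕ) :
    hist x (m + k) = hist x m ++ hist (fun j => x (m + j)) k := by
  simp only [hist, List.ofFn_add]
  rfl

lemma hist_succ (x : ℕ → α) (n : ℕ) : hist x (n + 1) = hist x n ++ [x n] := by
  rw [hist_add]
  simp [hist]

lemma hist_succ' (x : ℕ → α) (n : ℕ) :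
    hist x (n + 1) = x 0 :: hist (fun j => x (j + 1)) n := by
  simp only [hist, List.ofFn_succ]
  rfl

lemma hist_map {β : Type*} (g : α → β) (x : ℕ → α) (n : ℕ) :
    hist (fun i => g (x i)) n = (hist x n).map g :=
  List.map_ofFn.symm

lemma take_hist (x : ℕ → α) {k n : ℕ} (h : k ≤ n) : (hist x n).take k = hist x k := by
  obtain ⟨d, rfl⟩ := Nat.exists_eq_add_of_le h
  rw [hist_add, List.take_left' (hist_length x k)]

lemma drop_hist (x : ℕ → α) (m k : ℕ) :
    (hist x (m + k)).drop m = hist (fun j => x (m + j)) k := by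
  rw [hist_add, List.drop_left' (hist_length x m)]

lemma exists_eq_of_mem_hist {x : ℕ → α} {n : ℕ} {u : α} (h : u ∈ hist x n) :
    ∃ j < n, x j = u := by
  obtain ⟨j, rfl⟩ := List.mem_ofFn.1 h
  exact ⟨j, j.2, rfl⟩

lemma prefCat_append (l₁ l₂ : List α) (x : ℕ → α) :
    prefCat (l₁ ++ l₂) x = prefCat l₁ (prefCat l₂ x) := by
  funext n
  simp only [prefCat, List.length_append, List.get_eq_getElem]
  by_cases h₁ : n < l₁.length
  · simp [h₁, List.getElem_append_left h₁, show n < l₁.length + l₂.length by omega]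
  · by_cases h₂ : n < l₁.length + l₂.length
    · simp [h₁, h₂, List.getElem_append_right (Nat.le_of_not_lt h₁),
        show n - l₁.length < l₂.length by omega]
    · simp [h₁, h₂, show ¬ n - l₁.length < l₂.length by omega, Nat.sub_sub]

lemma prefCat_hist (x : ℕ → α) (n : ℕ) : prefCat (hist x n) (fun j => x (n + j)) = x := by
  funext i
  by_cases h : i < n
  · simp [prefCat, h, hist]
  · simp [prefCat, h, Nat.add_sub_cancel' (Nat.le_of_not_lt h)]

end Lists

section Support

variable {𝔽 : Type} [Field 𝔽] {E : Type} [AddCommGroup E] [Module 𝔽 E]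
  (b : Module.Basis ℕ 𝔽 E)

lemma supp_nonempty {x : E} (hx : x ≠ 0) : (supp b x).Nonempty := by
  simpa [supp, Finsupp.support_nonempty_iff] using hx

noncomputable def maxSupp (x : E) : ℕ := (supp b x).sup id

variable {b}

lemma le_maxSupp {x : E} {n : ℕ} (h : n ∈ supp b x) : n ≤ maxSupp b x :=
  Finset.le_sup (f := id) h

lemma maxSupp_mem {x : E} (hx : x ≠ 0) : maxSupp b x ∈ supp b x := by
  obtain ⟨n, hn, h⟩ := Finset.exists_mem_eq_sup _ (supp_nonempty b hx) id
  exact (show maxSupp b x = n from h) ▸ hn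

lemma VecLt.natLt_maxSupp {x y : E} (hx : x ≠ 0) (h : VecLt b x y) : NatLt b (maxSupp b x) y :=
  h _ (maxSupp_mem hx)

lemma NatLt.mono {k m : ℕ} {x : E} (h : k ≤ m) (hm : NatLt b m x) : NatLt b k x :=
  fun n hn => h.trans_lt (hm n hn)

lemma VecLt.of_natLt_maxSupp {x y : E} (h : NatLt b (maxSupp b x) y) : VecLt b x y :=
  fun _ hm n hn => (le_maxSupp hm).trans_lt (h n hn)

lemma VecLt.trans {x y z : E} (hy : y ≠ 0) (h₁ : VecLt b x y) (h₂ : VecLt b y z) :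
    VecLt b x z := by
  obtain ⟨m, hm⟩ := supp_nonempty b hy
  exact fun a ha c hc => (h₁ a ha m hm).trans (h₂ m hm c hc)

lemma eq_zero_of_natLt_of_le {t : ℕ} {v : E} (hlt : NatLt b t v)
    (hle : ∀ n ∈ supp b v, n ≤ t) : v = 0 := by
  by_contra hv
  obtain ⟨n, hn⟩ := supp_nonempty b hv
  exact (hle n hn).not_gt (hlt n hn)

variable (b)

noncomputable def supportedAbove (t : ℕ) : Submodule 𝔽 E :=
  (Finsupp.supported 𝔽 𝔽 (Set.Ioi t)).comap b.repr.toLinearMap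

noncomputable def supportedUpTo (t : ℕ) : Submodule 𝔽 E :=
  (Finsupp.supported 𝔽 𝔽 (Set.Iic t)).comap b.repr.toLinearMap

variable {b}

lemma mem_supportedAbove {t : ℕ} {v : E} : v ∈ supportedAbove b t ↔ NatLt b t v := Iff.rfl

lemma mem_supportedUpTo {t : ℕ} {v : E} :
    v ∈ supportedUpTo b t ↔ ∀ n ∈ supp b v, n ≤ t :=
  Iff.rfl

end Support

section BlockSeq

variable {𝔽 : Type} [Field 𝔽] {E : Type} [AddCommGroup E] [Module 𝔽 E]
  {b : Module.Basis ℕ 𝔽 E} {y : ℕ → E}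

lemma IsBlockSeq.vecLt (hy : IsBlockSeq b y) {m n : ℕ} (h : m < n) : VecLt b (y m) (y n) := by
  induction n, h using Nat.le_induction with
  | base => exact hy.2 m
  | succ n hmn ih => exact ih.trans (hy.1 n) (hy.2 n)

lemma IsBlockSeq.le_of_mem_supp (hy : IsBlockSeq b y) {m a : ℕ} (ha : a ∈ supp b (y m)) :
    m ≤ a := by
  induction m generalizing a with
  | zero => exact Nat.zero_le a
  | succ m ih =>
    obtain ⟨c, hc⟩ := supp_nonempty b (hy.1 m)
    exact (ih hc).trans_lt (hy.2 m c hc a ha)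

lemma IsBlockSeq.comp_add (hy : IsBlockSeq b y) (N : ℕ) : IsBlockSeq b (fun i => y (N + i)) :=
  ⟨fun _ => hy.1 _, fun n => hy.2 (N + n)⟩

end BlockSeq

section HighVectors

variable {𝔽 : Type} [Field 𝔽] {E : Type} [AddCommGroup E] [Module 𝔽 E]
  {b : Module.Basis ℕ 𝔽 E}

variable (b) in
def HasHighVectors (Z : Submodule 𝔽 E) : Prop :=
  ∀ n, ∃ v ∈ Z, v ≠ 0 ∧ NatLt b n v

lemma hasHighVectors_of_not_finiteDimensional {Z : Submodule 𝔽 E}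
    (hZ : ¬FiniteDimensional 𝔽 Z) : HasHighVectors b Z := by
  intro n
  -- `ker f`, the vectors supported above `n`, has finite codimension, so it meets `Z`
  let f : E →ₗ[𝔽] (Fin (n + 1) → 𝔽) :=
    LinearMap.pi fun i => (Finsupp.lapply (i : ℕ)).comp b.repr.toLinearMap
  have hne : Z ⊓ LinearMap.ker f ≠ ⊥ := by
    intro hbot
    refine hZ (Module.Finite.iff_fg.2 (Submodule.fg_of_fg_map_of_fg_inf_ker f
      (IsNoetherian.noetherian _) ?_))
    rw [hbot]
    exact Submodule.fg_bot
  obtain ⟨v, ⟨hvZ, hvker⟩, hv0⟩ := (Submodule.ne_bot_iff _).1 hne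
  refine ⟨v, hvZ, hv0, fun m hm => not_le.1 fun hmn => ?_⟩
  exact (Finsupp.mem_support_iff.1 hm) (congr_fun (LinearMap.mem_ker.1 hvker) ⟨m, by omega⟩)

lemma HasHighVectors.not_finiteDimensional {Z : Submodule 𝔽 E} (hZ : HasHighVectors b Z) :
    ¬FiniteDimensional 𝔽 Z := by
  intro hfd
  obtain ⟨s, hs⟩ := Module.Finite.iff_fg.1 hfd
  let t := s.sup (maxSupp b)
  have hZt : Z ≤ supportedUpTo b t := by
    rw [← hs, Submodule.span_le]
    exact fun v hv => mem_supportedUpTo.2 fun n hn =>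
      (le_maxSupp hn).trans (Finset.le_sup (f := maxSupp b) hv)
  obtain ⟨v, hvZ, hv0, hvt⟩ := hZ t
  exact hv0 (eq_zero_of_natLt_of_le hvt (mem_supportedUpTo.1 (hZt hvZ)))

lemma not_finiteDimensional_iff_hasHighVectors {Z : Submodule 𝔽 E} :
    ¬FiniteDimensional 𝔽 Z ↔ HasHighVectors b Z :=
  ⟨hasHighVectors_of_not_finiteDimensional, HasHighVectors.not_finiteDimensional⟩

lemma IsBlockSubspace.hasHighVectors {X : Submodule 𝔽 E} (hX : IsBlockSubspace b X) :
    HasHighVectors b X := by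
  obtain ⟨y, hy, rfl⟩ := hX
  exact fun n => ⟨y (n + 1), Submodule.subset_span ⟨n + 1, rfl⟩, hy.1 _,
    fun a ha => hy.le_of_mem_supp ha⟩

lemma exists_isBlockSeq_forall_mem {Z : ℕ → Submodule 𝔽 E}
    (hZ : ∀ k, HasHighVectors b (Z k)) (s : ℕ → ℕ) :
    ∃ d : ℕ → E, IsBlockSeq b d ∧ ∀ k, d k ∈ Z k ∧ NatLt b (s k) (d k) := by
  choose f hfZ hf0 hflt using hZ
  let d : ℕ → E := fun k =>
    Nat.rec (f 0 (s 0)) (fun k prev => f (k + 1) (max (s (k + 1)) (maxSupp b prev))) k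
  have hd : ∀ k, ∃ n, s k ≤ n ∧ d k = f k n := by
    rintro (_ | k)
    · exact ⟨s 0, le_rfl, rfl⟩
    · exact ⟨_, le_max_left _ _, rfl⟩
  refine ⟨d, ⟨fun k => ?_, fun k => ?_⟩, fun k => ?_⟩
  · obtain ⟨n, -, hn⟩ := hd k
    exact hn ▸ hf0 k n
  · exact VecLt.of_natLt_maxSupp ((hflt _ _).mono (le_max_right _ _))
  · obtain ⟨n, hsn, hn⟩ := hd k
    exact hn ▸ ⟨hfZ k n, (hflt k n).mono hsn⟩

lemma HasHighVectors.exists_isBlockSubspace_le {Z : Submodule 𝔽 E} (hZ : HasHighVectors b Z) :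
    ∃ Y, IsBlockSubspace b Y ∧ Y ≤ Z := by
  obtain ⟨y, hy, hyZ⟩ := exists_isBlockSeq_forall_mem (fun _ => hZ) (fun _ => 0)
  refine ⟨_, ⟨y, hy, rfl⟩, ?_⟩
  rw [Submodule.span_le]
  rintro _ ⟨i, rfl⟩
  exact (hyZ i).1

end HighVectors

section SubsetStar

variable {𝔽 : Type} [Field 𝔽] {E : Type} [AddCommGroup E] [Module 𝔽 E]
  {b : Module.Basis ℕ 𝔽 E} {X Y Z : Submodule 𝔽 E}

lemma SubsetStar.isBlockSubspace (h : SubsetStar b Y X) : IsBlockSubspace b Y :=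
  let ⟨y, hy, hY, _⟩ := h
  ⟨y, hy, hY⟩

lemma SubsetStar.of_le (hY : IsBlockSubspace b Y) (h : Y ≤ X) : SubsetStar b Y X := by
  obtain ⟨y, hy, rfl⟩ := hY
  exact ⟨y, hy, rfl, 0, fun m _ => h (Submodule.subset_span ⟨m, rfl⟩)⟩

lemma SubsetStar.refl (hX : IsBlockSubspace b X) : SubsetStar b X X :=
  .of_le hX le_rfl

lemma SubsetStar.exists_threshold (h : SubsetStar b Y X) :
    ∃ t, ∀ v ∈ Y, NatLt b t v → v ∈ X := by
  obtain ⟨y, hy, rfl, N, hN⟩ := h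
  -- `y 0, …, y N` are supported in `[0, t]` and the later `y i` lie in `X` above `t`, so a
  -- vector of `Y` above `t` has no component along `y 0, …, y N`
  let t := (Finset.range (N + 1)).sup fun i => maxSupp b (y i)
  have hhead : ∀ i ≤ N, y i ∈ supportedUpTo b t := fun i hi => mem_supportedUpTo.2 fun n hn =>
    (le_maxSupp hn).trans (Finset.le_sup (f := fun i => maxSupp b (y i)) (by simp; omega))
  have htail : ∀ i, N < i → y i ∈ X ⊓ supportedAbove b t := by
    intro i hi
    refine ⟨hN i hi.le, mem_supportedAbove.2 fun n hn => ?_⟩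
    obtain ⟨j, hj, hjt⟩ := Finset.exists_mem_eq_sup (Finset.range (N + 1))
      Finset.nonempty_range_add_one fun i => maxSupp b (y i)
    have hji : j < i := by rw [Finset.mem_range] at hj; omega
    change t < n
    rw [show t = _ from hjt]
    exact (hy.vecLt hji).natLt_maxSupp (hy.1 j) n hn
  have hspan : Submodule.span 𝔽 (Set.range y) ≤
      supportedUpTo b t ⊔ X ⊓ supportedAbove b t := by
    rw [Submodule.span_le]
    rintro _ ⟨i, rfl⟩
    rcases le_or_gt i N with hi | hi
    · exact Submodule.mem_sup_left (hhead i hi)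
    · exact Submodule.mem_sup_right (htail i hi)
  refine ⟨t, fun v hv hvt => ?_⟩
  obtain ⟨u, hu, w, ⟨hwX, hwt⟩, rfl⟩ := Submodule.mem_sup.1 (hspan hv)
  have hut : u ∈ supportedAbove b t := by
    simpa using (supportedAbove b t).sub_mem (mem_supportedAbove.2 hvt) hwt
  have hu0 : u = 0 := eq_zero_of_natLt_of_le hut (mem_supportedUpTo.1 hu)
  simpa [hu0] using hwX

lemma SubsetStar.trans (h₁ : SubsetStar b Y X) (h₂ : SubsetStar b X Z) : SubsetStar b Y Z := by
  obtain ⟨t, ht⟩ := h₂.exists_threshold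
  obtain ⟨y, hy, rfl, N, hN⟩ := h₁
  refine ⟨y, hy, rfl, max N (t + 1), fun m hm => ht _ (hN m (le_of_max_le_left hm)) ?_⟩
  exact fun a ha => by have := hy.le_of_mem_supp ha; omega

lemma SubsetStar.exists_le (h : SubsetStar b Y X) :
    ∃ W, IsBlockSubspace b W ∧ W ≤ X ∧ SubsetStar b W Y := by
  obtain ⟨y, hy, rfl, N, hN⟩ := h
  have hle : ∀ Z : Submodule 𝔽 E, (∀ m, N ≤ m → y m ∈ Z) →
      Submodule.span 𝔽 (Set.range fun i => y (N + i)) ≤ Z := fun Z hZ => by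
    rw [Submodule.span_le]
    rintro _ ⟨i, rfl⟩
    exact hZ _ (Nat.le_add_right N i)
  have hW : IsBlockSubspace b (Submodule.span 𝔽 (Set.range fun i => y (N + i))) :=
    ⟨_, hy.comp_add N, rfl⟩
  exact ⟨_, hW, hle X hN, .of_le hW (hle _ fun m _ => Submodule.subset_span ⟨m, rfl⟩)⟩

end SubsetStar

section Games

variable {𝔽 : Type} [Field 𝔽] {E : Type} [AddCommGroup E] [Module 𝔽 E]
  {b : Module.Basis ℕ 𝔽 E} {X Y Z : Submodule 𝔽 E} {p : List E} {A : Set (ℕ → E)}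

variable (b) in
def IsGStrategyAbove (X : Submodule 𝔽 E) (p : List E) (A : Set (ℕ → E)) (K : ℕ)
    (σ : List (Submodule 𝔽 E) → E) : Prop :=
  ∀ Y : ℕ → Submodule 𝔽 E, (∀ i, Y i ≤ X ∧ ¬FiniteDimensional 𝔽 ↥(Y i)) →
    (∀ i, σ (hist Y (i + 1)) ∈ Y i ∧ σ (hist Y (i + 1)) ≠ 0 ∧
        VecLt b (σ (hist Y (i + 1))) (σ (hist Y (i + 2))) ∧ NatLt b K (σ (hist Y (i + 1)))) ∧
      prefCat p (fun i => σ (hist Y (i + 1))) ∈ A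

variable (b) in
def IIWinsGAbove (X : Submodule 𝔽 E) (p : List E) (A : Set (ℕ → E)) (K : ℕ) : Prop :=
  ∃ σ, IsGStrategyAbove b X p A K σ

lemma IIWinsGAbove.iIWinsG {K : ℕ} (h : IIWinsGAbove b X p A K) : IIWinsG b X p A :=
  let ⟨σ, hσ⟩ := h
  ⟨σ, fun Y hY =>
    ⟨fun i => ((hσ Y hY).1 i).imp_right fun h => ⟨h.1, h.2.1⟩, (hσ Y hY).2⟩⟩

lemma IIWinsG.mono {A' : Set (ℕ → E)} (h : IIWinsG b X p A) (hAA' : A ⊆ A') :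
    IIWinsG b X p A' :=
  let ⟨σ, hσ⟩ := h
  ⟨σ, fun Y hY => ⟨(hσ Y hY).1, hAA' (hσ Y hY).2⟩⟩

lemma HasHighVectors.inf_supportedAbove (hZ : HasHighVectors b Z) (s : ℕ) :
    HasHighVectors b (Z ⊓ supportedAbove b s) := fun n =>
  let ⟨v, hvZ, hv0, hvn⟩ := hZ (max n s)
  ⟨v, ⟨hvZ, mem_supportedAbove.2 (hvn.mono (le_max_right n s))⟩, hv0,
    hvn.mono (le_max_left n s)⟩

/-- II plays the old strategy against I's subspaces cut down above a threshold beyond which `Y`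
lies in `X`. -/
lemma IIWinsG.iIWinsGAbove_of_subsetStar (h : IIWinsG b X p A) (hYX : SubsetStar b Y X)
    (K : ℕ) : IIWinsGAbove b Y p A K := by
  obtain ⟨σ, hσ⟩ := h
  obtain ⟨t, ht⟩ := hYX.exists_threshold
  let φ : Submodule 𝔽 E → Submodule 𝔽 E := (· ⊓ supportedAbove b (max t K))
  refine ⟨fun l => σ (l.map φ), fun Ys hYs => ?_⟩
  have hvalid : ∀ i, φ (Ys i) ≤ X ∧ ¬FiniteDimensional 𝔽 ↥(φ (Ys i)) := fun i =>
    ⟨fun v hv => ht v ((hYs i).1 hv.1) ((mem_supportedAbove.1 hv.2).mono (le_max_left t K)),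
      (((not_finiteDimensional_iff_hasHighVectors.1 (hYs i).2).inf_supportedAbove _)
        |> not_finiteDimensional_iff_hasHighVectors.2)⟩
  obtain ⟨hmoves, hout⟩ := hσ (fun i => φ (Ys i)) hvalid
  simp only [← hist_map]
  exact ⟨fun i => ⟨((hmoves i).1).1, (hmoves i).2.1, (hmoves i).2.2,
    (mem_supportedAbove.1 (hmoves i).1.2).mono (le_max_right t K)⟩, hout⟩

lemma IIWinsG.subsetStar (h : IIWinsG b X p A) (hYX : SubsetStar b Y X) : IIWinsG b Y p A :=
  (h.iIWinsGAbove_of_subsetStar hYX 0).iIWinsG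

/-- I additionally demands vectors above a threshold beyond which `Y` lies in `X`. -/
lemma IWinsF.subsetStar (h : IWinsF b X p A) (hYX : SubsetStar b Y X) : IWinsF b Y p A := by
  obtain ⟨σ, hσ⟩ := h
  obtain ⟨t, ht⟩ := hYX.exists_threshold
  refine ⟨fun l => max (σ l) (t + l.length), fun x hx => ?_⟩
  have hvalid : ∀ i, x i ∈ X ∧ x i ≠ 0 ∧ NatLt b (σ (hist x i)) (x i) ∧
      VecLt b (x i) (x (i + 1)) := fun i =>
    let ⟨hxY, hx0, hxlt, hxx⟩ := hx i
    ⟨ht _ hxY (hxlt.mono ((Nat.le_add_right _ _).trans (le_max_right _ _))), hx0,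
      hxlt.mono (le_max_left _ _), hxx⟩
  obtain ⟨hinc, hout⟩ := hσ x hvalid
  refine ⟨fun i => max_lt_max (hinc i) ?_, hout⟩
  simp

lemma IIWinsG.of_forall_exists_append
    (h : ∀ Y₀ ≤ Z, ¬FiniteDimensional 𝔽 Y₀ →
      ∃ v ∈ Y₀, v ≠ 0 ∧ IIWinsGAbove b Z (p ++ [v]) A (maxSupp b v)) :
    IIWinsG b Z p A := by
  classical
  have h' : ∀ Y₀ : Submodule 𝔽 E, ∃ v τ, Y₀ ≤ Z → ¬FiniteDimensional 𝔽 Y₀ →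
      v ∈ Y₀ ∧ v ≠ 0 ∧ IsGStrategyAbove b Z (p ++ [v]) A (maxSupp b v) τ := by
    intro Y₀
    by_cases hY₀ : Y₀ ≤ Z ∧ ¬FiniteDimensional 𝔽 Y₀
    · obtain ⟨v, hv, hv0, τ, hτ⟩ := h Y₀ hY₀.1 hY₀.2
      exact ⟨v, τ, fun _ _ => ⟨hv, hv0, hτ⟩⟩
    · exact ⟨0, fun _ => 0, fun h₁ h₂ => absurd ⟨h₁, h₂⟩ hY₀⟩
  choose v τ hvτ using h'
  -- II answers I's first move `Y₀` by `v Y₀`, then follows `τ Y₀` against I's later moves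
  let σ : List (Submodule 𝔽 E) → E
    | [] => 0
    | Y₀ :: rest => if rest = [] then v Y₀ else τ Y₀ rest
  refine ⟨σ, fun Y hY => ?_⟩
  let Y' : ℕ → Submodule 𝔽 E := fun j => Y (j + 1)
  obtain ⟨hv, hv0, hτ⟩ := hvτ (Y 0) (hY 0).1 (hY 0).2
  obtain ⟨hmoves, hout⟩ := hτ Y' fun i => hY (i + 1)
  have hσ0 : σ (hist Y 1) = v (Y 0) := rfl
  have hσsucc : ∀ i, σ (hist Y (i + 2)) = τ (Y 0) (hist Y' (i + 1)) := fun i => by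
    rw [hist_succ' Y (i + 1)]
    simp [σ, ← List.length_eq_zero_iff, Y']
  refine ⟨fun i => ?_, ?_⟩
  · rcases i with _ | i
    · rw [hσ0, hσsucc 0]
      exact ⟨hv, hv0, VecLt.of_natLt_maxSupp (hmoves 0).2.2.2⟩
    · rw [hσsucc i, hσsucc (i + 1)]
      exact ⟨(hmoves i).1, (hmoves i).2.1, (hmoves i).2.2.1⟩
  · convert hout using 1
    rw [prefCat_append]
    congr 1
    funext n
    rcases n with _ | n
    · simp [prefCat, hσ0]
    · simp [prefCat, hσsucc]

end Games

section Fusion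

variable {𝔽 : Type} [Field 𝔽] {E : Type} [AddCommGroup E] [Module 𝔽 E]
  {b : Module.Basis ℕ 𝔽 E}

lemma exists_subsetStar_of_chain {W : ℕ → Submodule 𝔽 E}
    (hW : ∀ k, IsBlockSubspace b (W k)) (hWW : ∀ k, SubsetStar b (W (k + 1)) (W k)) :
    ∃ Y, IsBlockSubspace b Y ∧ ∀ k, SubsetStar b Y (W k) := by
  choose t ht using fun k => (hWW k).exists_threshold
  let T : ℕ → ℕ := fun k => (Finset.range k).sup t
  have hdesc : ∀ k, ∀ v ∈ W k, NatLt b (T k) v → ∀ j ≤ k, v ∈ W j := by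
    intro k
    induction k with
    | zero => exact fun v hv _ j hj => Nat.le_zero.1 hj ▸ hv
    | succ k ih =>
      intro v hv hvT j hj
      rcases hj.lt_or_eq with hj | rfl
      · exact ih v (ht k v hv (hvT.mono (Finset.le_sup (Finset.self_mem_range_succ k))))
          (hvT.mono (Finset.sup_mono (Finset.range_subset_range.2 k.le_succ))) j
          (Nat.lt_succ_iff.1 hj)
      · exact hv
  obtain ⟨d, hd, hdW⟩ := exists_isBlockSeq_forall_mem (fun k => (hW k).hasHighVectors) T
  exact ⟨_, ⟨d, hd, rfl⟩, fun j =>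
    ⟨d, hd, rfl, j, fun m hm => hdesc m (d m) (hdW m).1 (hdW m).2 j hm⟩⟩

lemma exists_subsetStar_of_antitone {J : Type*} [LinearOrder J] [Countable J] [Nonempty J]
    {T : J → Submodule 𝔽 E} (hT : ∀ i j, i ≤ j → SubsetStar b (T j) (T i)) :
    ∃ Y, ∀ j, SubsetStar b Y (T j) := by
  obtain ⟨q, hq⟩ := exists_surjective_nat J
  let m : ℕ → J := fun k => Nat.rec (q 0) (fun k j => max j (q (k + 1))) k
  have hqm : ∀ k, q k ≤ m k := by
    rintro (_ | k)
    · exact le_rfl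
    · exact le_max_right _ _
  obtain ⟨Y, -, hYm⟩ := exists_subsetStar_of_chain (fun k => (hT _ _ le_rfl).isBlockSubspace)
    fun k => hT (m k) (m (k + 1)) (le_max_left _ _)
  refine ⟨Y, fun j => ?_⟩
  obtain ⟨k, rfl⟩ := hq j
  exact (hYm k).trans (hT _ _ (hqm k))

variable (b) in
/-- Build `T ξ ⊆* S` satisfying `P ξ` by recursion, each below a common lower bound of its
countably many predecessors; then (H1) bounds the whole `⊆*`-decreasing family. -/
lemma exists_subsetStar_forall_of_wellFoundedLT {ι : Type*} [LinearOrder ι] [WellFoundedLT ι]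
    [Nonempty ι] (hι : ∀ ξ : ι, Countable (Set.Iio ξ))
    (H1 : ∀ X : ι → Submodule 𝔽 E, (∀ ξ, IsBlockSubspace b (X ξ)) →
      (∀ ξ ζ, ξ < ζ → SubsetStar b (X ζ) (X ξ)) →
      ∃ Y, IsBlockSubspace b Y ∧ ∀ ξ, SubsetStar b Y (X ξ))
    {P : ι → Submodule 𝔽 E → Prop} (hP : ∀ ξ X Y, P ξ X → SubsetStar b Y X → P ξ Y)
    {S : Submodule 𝔽 E} (hS : IsBlockSubspace b S)
    (hdense : ∀ ξ X, SubsetStar b X S → ∃ X', SubsetStar b X' X ∧ P ξ X') :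
    ∃ Y, SubsetStar b Y S ∧ ∀ ξ, P ξ Y := by
  classical
  let Good (ξ : ι) (T : ∀ η, η < ξ → Submodule 𝔽 E) (X : Submodule 𝔽 E) : Prop :=
    SubsetStar b X S ∧ (∀ η hη, SubsetStar b X (T η hη)) ∧ P ξ X
  let T : ι → Submodule 𝔽 E := wellFounded_lt.fix fun ξ T =>
    if h : ∃ X, Good ξ T X then h.choose else S
  have hT : ∀ ξ, Good ξ (fun η _ => T η) (T ξ) := by
    refine fun ξ => wellFounded_lt.induction (C := fun ξ => Good ξ (fun η _ => T η) (T ξ)) ξ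
      fun ξ ih => ?_
    have hex : ∃ X, Good ξ (fun η _ => T η) X := by
      obtain ⟨L, hLS, hLT⟩ :
          ∃ L, SubsetStar b L S ∧ ∀ η < ξ, SubsetStar b L (T η) := by
        by_cases hξ : Nonempty (Set.Iio ξ)
        · have := hι ξ
          obtain ⟨L, hL⟩ := exists_subsetStar_of_antitone (T := fun η : Set.Iio ξ => T η)
            fun η η' h => h.lt_or_eq.elim (fun h => (ih η' η'.2).2.1 η h)
              fun h => h ▸ .refl (ih η η.2).1.isBlockSubspace
          obtain ⟨⟨η₀, hη₀⟩⟩ := hξ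
          exact ⟨L, (hL ⟨η₀, hη₀⟩).trans (ih η₀ hη₀).1,
            fun η hη => hL ⟨η, hη⟩⟩
        · exact ⟨S, .refl hS, fun η hη => (hξ ⟨⟨η, hη⟩⟩).elim⟩
      obtain ⟨X, hXL, hPX⟩ := hdense ξ L hLS
      exact ⟨X, hXL.trans hLS, fun η hη => hXL.trans (hLT η hη), hPX⟩
    rw [show T ξ = _ from wellFounded_lt.fix_eq _ ξ, dif_pos hex]
    exact hex.choose_spec
  obtain ⟨Y, -, hYT⟩ :=
    H1 T (fun ξ => (hT ξ).1.isBlockSubspace) fun ξ ζ h => (hT ζ).2.1 ξ h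
  obtain ⟨ξ₀⟩ := ‹Nonempty ι›
  exact ⟨Y, (hYT ξ₀).trans (hT ξ₀).1, fun ξ => hP ξ _ _ (hT ξ).2.2 (hYT ξ)⟩

lemma exists_subsetStar_forall {κ : Type*} [Countable κ] [Nonempty κ]
    {P : κ → Submodule 𝔽 E → Prop} (hP : ∀ i X Y, P i X → SubsetStar b Y X → P i Y)
    {S : Submodule 𝔽 E} (hS : IsBlockSubspace b S)
    (hdense : ∀ i X, SubsetStar b X S → ∃ X', SubsetStar b X' X ∧ P i X') :
    ∃ Y, SubsetStar b Y S ∧ ∀ i, P i Y := by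
  obtain ⟨e, he⟩ := exists_surjective_nat κ
  obtain ⟨Y, hYS, hY⟩ := exists_subsetStar_forall_of_wellFoundedLT b (ι := ℕ)
    (fun _ => Set.to_countable _)
    (fun X hX hXX => exists_subsetStar_of_chain hX fun k => hXX k (k + 1) k.lt_succ_self)
    (P := fun n => P (e n)) (fun n => hP (e n)) hS fun n => hdense (e n)
  refine ⟨Y, hYS, fun i => ?_⟩
  obtain ⟨n, rfl⟩ := he i
  exact hY n

end Fusion

section Rejection

variable {𝔽 : Type} [Field 𝔽] {E : Type} [AddCommGroup E] [Module 𝔽 E]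
  {b : Module.Basis ℕ 𝔽 E} {U : Set (ℕ → E)} {V W X Z : Submodule 𝔽 E} {p : List E}

variable (b) in
def Rejects (W : Submodule 𝔽 E) (U : Set (ℕ → E)) (p : List E) : Prop :=
  ∀ Z, SubsetStar b Z W → ¬IIWinsG b Z p U

lemma Rejects.subsetStar (h : Rejects b W U p) (hXW : SubsetStar b X W) : Rejects b X U p :=
  fun Z hZX => h Z (hZX.trans hXW)

lemma exists_subsetStar_rejects_or_iIWinsG [Countable E] (hV : IsBlockSubspace b V)
    (U : Set (ℕ → E)) :
    ∃ W, SubsetStar b W V ∧ ∀ p, Rejects b W U p ∨ IIWinsG b W p U := by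
  refine exists_subsetStar_forall (P := fun p W => Rejects b W U p ∨ IIWinsG b W p U)
    (fun p X Y h hYX => h.imp (·.subsetStar hYX) (·.subsetStar hYX)) hV fun p X hXV => ?_
  by_cases h : ∃ Z, SubsetStar b Z X ∧ IIWinsG b Z p U
  · obtain ⟨Z, hZX, hZ⟩ := h
    exact ⟨Z, hZX, .inr hZ⟩
  · exact ⟨X, .refl hXV.isBlockSubspace, .inl fun Z hZX hZ => h ⟨Z, hZX, hZ⟩⟩

lemma Rejects.exists_le_forall_rejects_append (hp : Rejects b W U p)
    (hdec : ∀ v, Rejects b W U (p ++ [v]) ∨ IIWinsG b W (p ++ [v]) U) (hZW : SubsetStar b Z W) :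
    ∃ Y, IsBlockSubspace b Y ∧ Y ≤ Z ∧
      ∀ v ∈ Y, v ≠ 0 → Rejects b W U (p ++ [v]) := by
  -- otherwise every subspace played by I contains a first move after which II wins
  by_contra! hcon
  refine hp Z hZW (IIWinsG.of_forall_exists_append fun Y₀ hY₀Z hY₀ => ?_)
  obtain ⟨Y, hY, hYY₀⟩ :=
    (not_finiteDimensional_iff_hasHighVectors.1 hY₀).exists_isBlockSubspace_le (b := b)
  obtain ⟨v, hvY, hv0, hv⟩ := hcon Y hY (hYY₀.trans hY₀Z)
  exact ⟨v, hYY₀ hvY, hv0, ((hdec v).resolve_left hv).iIWinsGAbove_of_subsetStar hZW _⟩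

lemma exists_subsetStar_forall_rejects_append [Countable E] (hW : IsBlockSubspace b W)
    (hdec : ∀ p, Rejects b W U p ∨ IIWinsG b W p U) :
    ∃ X, SubsetStar b X W ∧ ∀ p, Rejects b W U p →
      ∃ Y, SubsetStar b X Y ∧ ∀ v ∈ Y, v ≠ 0 → Rejects b W U (p ++ [v]) := by
  refine exists_subsetStar_forall (P := fun p X => Rejects b W U p →
      ∃ Y, SubsetStar b X Y ∧ ∀ v ∈ Y, v ≠ 0 → Rejects b W U (p ++ [v]))
    (fun p X X' h hX'X hp => (h hp).imp fun Y hY => ⟨hX'X.trans hY.1, hY.2⟩) hW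
    fun p X hXW => ?_
  by_cases hp : Rejects b W U p
  · obtain ⟨Y, hY, hYX, hYp⟩ := hp.exists_le_forall_rejects_append (fun v => hdec _) hXW
    exact ⟨Y, .of_le hY hYX, fun _ => ⟨Y, .refl hY, hYp⟩⟩
  · exact ⟨X, .refl hXW.isBlockSubspace, fun h => (hp h).elim⟩

lemma StrategicallyRamsey.exists_subsetStar_iWinsF_compl {A : Set (ℕ → E)}
    (hA : StrategicallyRamsey b A) (hAU : A ⊆ U) (hXW : SubsetStar b X W) (hp : Rejects b W U p)
    (hpb : IsFinBlockSeq b p) : ∃ Y, SubsetStar b Y X ∧ IWinsF b Y p Aᶜ := by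
  obtain ⟨Y, hYX, hY, hII | hI⟩ := hA X hXW.isBlockSubspace p hpb
  · exact absurd (hII.mono hAU) (hp Y ((SubsetStar.of_le hY hYX).trans hXW))
  · exact ⟨Y, .of_le hY hYX, hI⟩

lemma StrategicallyRamsey.exists_subsetStar_forall_iWinsF_compl [Countable E] {A : Set (ℕ → E)}
    (hA : StrategicallyRamsey b A) (hAU : A ⊆ U) (hXW : SubsetStar b X W) :
    ∃ Y, SubsetStar b Y X ∧
      ∀ p, Rejects b W U p → IsFinBlockSeq b p → IWinsF b Y p Aᶜ := by
  refine exists_subsetStar_forall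
    (P := fun p Y => Rejects b W U p → IsFinBlockSeq b p → IWinsF b Y p Aᶜ)
    (fun p Y Y' h hY'Y hp hpb => (h hp hpb).subsetStar hY'Y) hXW.isBlockSubspace fun p Y hYX => ?_
  by_cases hp : Rejects b W U p ∧ IsFinBlockSeq b p
  · obtain ⟨Y', hY'Y, hI⟩ := hA.exists_subsetStar_iWinsF_compl hAU (hYX.trans hXW) hp.1 hp.2
    exact ⟨Y', hY'Y, fun _ _ => hI⟩
  · exact ⟨Y, .refl hYX.isBlockSubspace, fun h₁ h₂ => (hp ⟨h₁, h₂⟩).elim⟩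

end Rejection

section PrefixMax

variable {α : Type*}

def prefixMax (h : List α → ℕ) (l : List α) : ℕ :=
  (Finset.range (l.length + 1)).sup fun k => h (l.take k)

lemma le_prefixMax (h : List α → ℕ) (l : List α) : h l ≤ prefixMax h l := by
  have := Finset.le_sup (f := fun k => h (l.take k)) (Finset.self_mem_range_succ l.length)
  simpa [prefixMax] using this

lemma prefixMax_hist_le_succ (h : List α → ℕ) (x : ℕ → α) (i : ℕ) :
    prefixMax h (hist x i) ≤ prefixMax h (hist x (i + 1)) := by
  refine Finset.sup_le fun k hk => ?_
  rw [hist_length, Finset.mem_range] at hk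
  rw [take_hist x (by omega : k ≤ i), ← take_hist x (by omega : k ≤ i + 1)]
  exact Finset.le_sup (f := fun k => h ((hist x (i + 1)).take k)) (by simp; omega)

end PrefixMax

section Diagonal

variable {𝔽 : Type} [Field 𝔽] {E : Type} [AddCommGroup E] [Module 𝔽 E]
  {b : Module.Basis ℕ 𝔽 E}

lemma IsFinBlockSeq.append_singleton {l : List E} {v : E} (hl : IsFinBlockSeq b l) (hv : v ≠ 0)
    (hlv : ∀ u ∈ l, VecLt b u v) : IsFinBlockSeq b (l ++ [v]) := by
  refine ⟨by simpa [or_imp, forall_and] using ⟨hl.1, hv⟩,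
    hl.2.append (List.isChain_singleton v) ?_⟩
  intro u hu y hy
  obtain rfl : v = y := by simpa using hy
  exact hlv u (List.mem_of_mem_getLast? hu)

lemma IsFinBlockSeq.append_hist {z : List E} {x : ℕ → E} (hz : IsFinBlockSeq b z)
    (hx : IsBlockSeq b x) (hzx : ∀ u ∈ z, ∀ i, VecLt b u (x i)) (i : ℕ) :
    IsFinBlockSeq b (z ++ hist x i) := by
  induction i with
  | zero => simpa [hist] using hz
  | succ i ih =>
    rw [hist_succ, ← List.append_assoc]
    refine ih.append_singleton (hx.1 i) fun u hu => ?_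
    rcases List.mem_append.1 hu with hu | hu
    · exact hzx u hu i
    · obtain ⟨j, hji, rfl⟩ := exists_eq_of_mem_hist hu
      exact hx.vecLt hji

/-- I stays in `R` and plays above a bound which, by `H2`, eventually dominates along the play
every strategy for `(A ξ)ᶜ` started at an earlier position. -/
theorem iWinsF_compl_iUnion [Countable E] {ι : Type*}
    (H2 : ∀ (D : Type) [Countable D] (f : ι → D → ℕ),
      ∃ g : D → ℕ, ∀ ξ, {d : D | ¬f ξ d ≤ g d}.Finite)
    {A : ι → Set (ℕ → E)} {W : Submodule 𝔽 E} {z : List E} (hz : IsFinBlockSeq b z)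
    {R : List E → Prop} (hRz : R z)
    (hR : ∀ p, R p → ∃ t, ∀ v ∈ W, v ≠ 0 → NatLt b t v → R (p ++ [v]))
    (hI : ∀ ξ p, R p → IsFinBlockSeq b p → IWinsF b W p (A ξ)ᶜ) :
    IWinsF b W z (⋃ ξ, A ξ)ᶜ := by
  classical
  choose thr hthr using fun p =>
    if hp : R p then (hR p hp).imp fun _ ht _ => ht else ⟨0, fun h => (hp h).elim⟩
  let σ (ξ : ι) (p : List E) : List E → ℕ :=
    if hp : R p ∧ IsFinBlockSeq b p then (hI ξ p hp.1 hp.2).choose else fun _ => 0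
  have hσ : ∀ ξ p (hp : R p ∧ IsFinBlockSeq b p), σ ξ p = (hI ξ p hp.1 hp.2).choose :=
    fun ξ p hp => dif_pos hp
  obtain ⟨g, hg⟩ := H2 (List E) fun ξ l =>
    (Finset.range (l.length + 1)).sup fun k => σ ξ (z ++ l.take k) (l.drop k)
  let K := (z.map (maxSupp b)).sum
  refine ⟨fun l => K + l.length + prefixMax (fun l => g l + thr (z ++ l)) l,
    fun x hx => ?_⟩
  have hbound : ∀ i, NatLt b K (x i) ∧ NatLt b (g (hist x i)) (x i) ∧
      NatLt b (thr (z ++ hist x i)) (x i) := fun i => by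
    have := le_prefixMax (fun l => g l + thr (z ++ l)) (hist x i)
    obtain ⟨-, -, hlt, -⟩ := hx i
    simp only [hist_length] at hlt
    exact ⟨hlt.mono (by omega), hlt.mono (by omega), hlt.mono (by omega)⟩
  have hblock : ∀ i, IsFinBlockSeq b (z ++ hist x i) :=
    hz.append_hist ⟨fun i => (hx i).2.1, fun i => (hx i).2.2.2⟩ fun u hu i =>
      VecLt.of_natLt_maxSupp ((hbound i).1.mono (List.le_sum_of_mem (List.mem_map_of_mem hu)))
  have hRx : ∀ i, R (z ++ hist x i) := by
    intro i
    induction i with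
    | zero => simpa [hist] using hRz
    | succ i ih =>
      rw [hist_succ, ← List.append_assoc]
      exact hthr _ ih _ (hx i).1 (hx i).2.1 (hbound i).2.2
  refine ⟨fun i => ?_, fun hxA => ?_⟩
  · have := prefixMax_hist_le_succ (fun l => g l + thr (z ++ l)) x i
    simp only [hist_length]
    omega
  obtain ⟨ξ, hξ⟩ := Set.mem_iUnion.1 hxA
  obtain ⟨N, hN⟩ := ((hg ξ).image List.length).bddAbove
  -- beyond the lengths of the finitely many exceptions to `g` dominating `ξ`
  let M := N + 1
  have hdom : ∀ j,
      σ ξ (z ++ hist x M) (hist (fun j => x (M + j)) j) ≤ g (hist x (M + j)) := by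
    intro j
    have hgood : hist x (M + j) ∉ {d | ¬_ ≤ g d} := fun h => by
      have := hN ⟨_, h, rfl⟩
      simp only [hist_length] at this
      omega
    refine le_trans ?_ (not_not.1 hgood)
    rw [← take_hist x (Nat.le_add_right M j), ← drop_hist]
    exact Finset.le_sup
      (f := fun k => σ ξ (z ++ (hist x (M + j)).take k) ((hist x (M + j)).drop k)) (by simp)
  obtain ⟨-, hout⟩ := (hI ξ _ (hRx M) (hblock M)).choose_spec (fun j => x (M + j)) fun j =>
    ⟨(hx (M + j)).1, (hx (M + j)).2.1,
      hσ ξ _ ⟨hRx M, hblock M⟩ ▸ (hbound (M + j)).2.1.mono (hdom j), (hx (M + j)).2.2.2⟩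
  rw [prefCat_append, prefCat_hist] at hout
  exact hout hξ

end Diagonal

section Main

variable {𝔽 : Type} [Field 𝔽] {E : Type} [AddCommGroup E] [Module 𝔽 E]

theorem StrategicallyRamsey.iUnion_of_wellFoundedLT [Countable 𝔽] (b : Module.Basis ℕ 𝔽 E)
    {ι : Type*} [LinearOrder ι] [WellFoundedLT ι] [Nonempty ι]
    (hι : ∀ ξ : ι, Countable (Set.Iio ξ))
    (H1 : ∀ X : ι → Submodule 𝔽 E, (∀ ξ, IsBlockSubspace b (X ξ)) →
      (∀ ξ ζ, ξ < ζ → SubsetStar b (X ζ) (X ξ)) →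
      ∃ Y, IsBlockSubspace b Y ∧ ∀ ξ, SubsetStar b Y (X ξ))
    (H2 : ∀ (D : Type) [Countable D] (f : ι → D → ℕ),
      ∃ g : D → ℕ, ∀ ξ, {d : D | ¬f ξ d ≤ g d}.Finite)
    {A : ι → Set (ℕ → E)} (hA : ∀ ξ, StrategicallyRamsey b (A ξ)) :
    StrategicallyRamsey b (⋃ ξ, A ξ) := by
  have : Countable E := b.repr.injective.countable
  intro V hV z hz
  set U := ⋃ ξ, A ξ
  obtain ⟨W, hWV, hdec⟩ := exists_subsetStar_rejects_or_iIWinsG hV U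
  by_cases hzW : Rejects b W U z
  · obtain ⟨W₁, hW₁W, hext⟩ :=
      exists_subsetStar_forall_rejects_append hWV.isBlockSubspace hdec
    obtain ⟨W₂, hW₂W₁, hI⟩ := exists_subsetStar_forall_of_wellFoundedLT b hι H1
      (P := fun ξ Y => ∀ p, Rejects b W U p → IsFinBlockSeq b p → IWinsF b Y p (A ξ)ᶜ)
      (fun ξ X Y h hYX p hp hpb => (h p hp hpb).subsetStar hYX) hW₁W.isBlockSubspace
      fun ξ X hX => (hA ξ).exists_subsetStar_forall_iWinsF_compl (Set.subset_iUnion A ξ)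
        (hX.trans hW₁W)
    obtain ⟨Y, hY, hYV, hYW₂⟩ := (hW₂W₁.trans (hW₁W.trans hWV)).exists_le
    have hthr : ∀ p, Rejects b W U p →
        ∃ t, ∀ v ∈ Y, v ≠ 0 → NatLt b t v → Rejects b W U (p ++ [v]) := by
      intro p hp
      obtain ⟨Y', hW₁Y', hY'⟩ := hext p hp
      obtain ⟨t, ht⟩ := (hYW₂.trans (hW₂W₁.trans hW₁Y')).exists_threshold
      exact ⟨t, fun v hv hv0 hvt => hY' v (ht v hv hvt) hv0⟩
    exact ⟨Y, hYV, hY, .inr (iWinsF_compl_iUnion H2 hz hzW hthr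
      fun ξ p hp hpb => (hI ξ p hp hpb).subsetStar hYW₂)⟩
  · obtain ⟨Y, hY, hYV, hYW⟩ := hWV.exists_le
    exact ⟨Y, hYV, hY, .inl (((hdec z).resolve_left hzW).subsetStar hYW)⟩

end Main

section OmegaOne

universe u v

lemma lift_lt_aleph_one_ord {o : Ordinal.{u}} :
    Ordinal.lift.{v} o < (Cardinal.aleph 1).ord ↔ o < (Cardinal.aleph 1).ord := by
  rw [Cardinal.ord_aleph, Cardinal.ord_aleph, Ordinal.lift_lt_omega_one]

lemma lift_aleph_one_ord :
    Ordinal.lift.{v} (Cardinal.aleph.{u} 1).ord = (Cardinal.aleph 1).ord := by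
  rw [Cardinal.lift_ord, Cardinal.lift_aleph, Ordinal.lift_one]

lemma countable_Iio_of_lt_aleph_one_ord (ξ : {o : Ordinal.{u} // o < (Cardinal.aleph 1).ord}) :
    Countable (Set.Iio ξ) := by
  have hξ : (Set.Iio ξ.1).Countable := by
    rw [← Cardinal.le_aleph0_iff_set_countable, Cardinal.mk_Iio_ordinal, Cardinal.lift_le_aleph0,
      ← Cardinal.lt_aleph_one_iff]
    exact Cardinal.lt_ord.1 ξ.2
  exact (hξ.preimage Subtype.val_injective : (Set.Iio ξ).Countable).to_subtype

noncomputable def liftAlephOneOrdIio :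
    {o : Ordinal.{u} // o < (Cardinal.aleph 1).ord} ≃o
      {o : Ordinal.{max u v} // o < (Cardinal.aleph 1).ord} :=
  StrictMono.orderIsoOfSurjective (fun o => ⟨Ordinal.lift.{v} o.1, lift_lt_aleph_one_ord.2 o.2⟩)
    (fun _ _ h => Ordinal.lift_lt.2 h) fun o => by
      obtain ⟨o', ho'⟩ := Ordinal.mem_range_lift_of_le.{u, v}
        (o.2.le.trans_eq lift_aleph_one_ord.symm)
      exact ⟨⟨o', lift_lt_aleph_one_ord.1 (ho'.symm ▸ o.2)⟩, Subtype.ext ho'⟩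

noncomputable def alephOneOrdIioOrderIso :
    {o : Ordinal.{u} // o < (Cardinal.aleph 1).ord} ≃o
      {o : Ordinal.{v} // o < (Cardinal.aleph 1).ord} :=
  liftAlephOneOrdIio.{u, v}.trans liftAlephOneOrdIio.{v, u}.symm

end OmegaOne

theorem strategicallyRamsey_iUnion_aleph1
    {𝔽 : Type} [Field 𝔽] [Countable 𝔽]
    {E : Type} [AddCommGroup E] [Module 𝔽 E]
    (b : Module.Basis ℕ 𝔽 E)
    (H1 : ∀ X : {o : Ordinal // o < (Cardinal.aleph 1).ord} → Submodule 𝔽 E,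
      (∀ ξ, IsBlockSubspace b (X ξ)) →
      (∀ ξ ζ : {o : Ordinal // o < (Cardinal.aleph 1).ord}, ξ < ζ → SubsetStar b (X ζ) (X ξ)) →
      ∃ Y : Submodule 𝔽 E, IsBlockSubspace b Y ∧ ∀ ξ, SubsetStar b Y (X ξ))
    (H2 : ∀ (D : Type) [Countable D] (f : {o : Ordinal // o < (Cardinal.aleph 1).ord} → D → ℕ),
      ∃ g : D → ℕ, ∀ ξ, {d : D | ¬f ξ d ≤ g d}.Finite)
    (A : {o : Ordinal // o < (Cardinal.aleph 1).ord} → Set (ℕ → E))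
    (hA : ∀ ξ, StrategicallyRamsey b (A ξ)) :
    StrategicallyRamsey b (⋃ ξ, A ξ) := by
  have : Nonempty {o : Ordinal // o < (Cardinal.aleph 1).ord} :=
    ⟨⟨0, Cardinal.ord_pos.2 (Cardinal.aleph_pos 1)⟩⟩
  refine StrategicallyRamsey.iUnion_of_wellFoundedLT b countable_Iio_of_lt_aleph_one_ord
    (fun X hX hXX => ?_) (fun D _ f => ?_) hA
  · let e := alephOneOrdIioOrderIso
    obtain ⟨Y, hY, hYX⟩ :=
      H1 (X ∘ e) (fun ξ => hX _) fun ξ ζ h => hXX _ _ (e.lt_iff_lt.2 h)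
    exact ⟨Y, hY, fun ξ => e.apply_symm_apply ξ ▸ hYX (e.symm ξ)⟩
  · let e := alephOneOrdIioOrderIso
    obtain ⟨g, hg⟩ := H2 D (f ∘ e)
    exact ⟨g, fun ξ => e.apply_symm_apply ξ ▸ hg (e.symm ξ)⟩
end

section
/- Let 𝒜 ⊆ E^∞ and let X, Y be block subspaces with Y ⊆* X. If I has a strategy in the infinite asymptotic game F_X to play in 𝒜, then I has a strategy in F_Y to play in 𝒜. -/
/-! Only the finitely many block vectors `y 0, …, y (N - 1)` spanning `Y` can lie outside `X`,
and these have supports bounded by some `K`; since the block vectors have disjoint supports, a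
vector of `Y` supported beyond `K` is a combination of the later `y m` and hence lies in `X`.
So player I wins `F_Y` by playing his winning strategy for `F_X` shifted up by `K`. -/

section BlockSequences

variable {𝔽 : Type} [Field 𝔽] {E : Type} [AddCommGroup E] [Module 𝔽 E]

theorem supp_nonempty_s12 (b : Module.Basis ℕ 𝔽 E) {v : E} (hv : v ≠ 0) : (supp b v).Nonempty :=
  Finsupp.support_nonempty_iff.mpr <| (LinearEquiv.map_ne_zero_iff b.repr).mpr hv

variable {b : Module.Basis ℕ 𝔽 E}

theorem NatLt.mono_s12 {k k' : ℕ} {v : E} (h : NatLt b k v) (hk : k' ≤ k) : NatLt b k' v :=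
  fun n hn => hk.trans_lt (h n hn)

namespace IsBlockSeq

variable {y : ℕ → E} (hy : IsBlockSeq b y)
include hy

theorem vecLt_of_lt {m m' : ℕ} (h : m < m') : VecLt b (y m) (y m') := by
  induction m', h using Nat.le_induction with
  | base => exact hy.2 m
  | succ k _ ih =>
    intro p hp q hq
    obtain ⟨t, ht⟩ := supp_nonempty_s12 b (hy.1 k)
    exact (ih p hp t ht).trans (hy.2 _ t ht q hq)

theorem repr_apply_eq_zero_of_ne {i m n : ℕ} (hn : n ∈ supp b (y m)) (hi : i ≠ m) :
    b.repr (y i) n = 0 := by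
  refine Finsupp.notMem_support_iff.mp fun hni => ?_
  rcases hi.lt_or_gt with hlt | hgt
  · exact lt_irrefl n (hy.vecLt_of_lt hlt n hni n hn)
  · exact lt_irrefl n (hy.vecLt_of_lt hgt n hn n hni)

theorem repr_linearCombination_apply {m n : ℕ} (hn : n ∈ supp b (y m)) (c : ℕ →₀ 𝔽) :
    b.repr (c.sum fun i a => a • y i) n = c m * b.repr (y m) n := by
  rw [map_finsuppSum, Finsupp.sum_apply, Finsupp.sum]
  refine Finset.sum_eq_single m (fun i _ hi => ?_) (fun hm => ?_) |>.trans (by simp)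
  · simp [hy.repr_apply_eq_zero_of_ne hn hi]
  · simp [Finsupp.notMem_support_iff.mp hm]

theorem mem_of_natLt {N K : ℕ} (hK : ∀ m < N, ∀ n ∈ supp b (y m), n ≤ K)
    {X : Submodule 𝔽 E} (hyX : ∀ m, N ≤ m → y m ∈ X)
    {v : E} (hv : v ∈ Submodule.span 𝔽 (Set.range y)) (hvK : NatLt b K v) : v ∈ X := by
  obtain ⟨c, rfl⟩ := Finsupp.mem_span_range_iff_exists_finsupp.mp hv
  refine Submodule.sum_mem _ fun m hm => ?_
  by_cases hmN : N ≤ m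
  · exact Submodule.smul_mem _ _ (hyX m hmN)
  obtain ⟨n, hn⟩ := supp_nonempty_s12 b (hy.1 m)
  have hn_supp : n ∈ supp b (c.sum fun i a => a • y i) := by
    rw [supp, Finsupp.mem_support_iff, hy.repr_linearCombination_apply hn]
    exact mul_ne_zero (Finsupp.mem_support_iff.mp hm) (Finsupp.mem_support_iff.mp hn)
  exact absurd (hK m (not_le.mp hmN) n hn) (not_le.mpr (hvK n hn_supp))

end IsBlockSeq

theorem SubsetStar.exists_natLt_imp_mem {X Y : Submodule 𝔽 E} (hYX : SubsetStar b Y X) :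
    ∃ K : ℕ, ∀ v ∈ Y, NatLt b K v → v ∈ X := by
  obtain ⟨y, hy, rfl, N, hN⟩ := hYX
  refine ⟨((Finset.range N).biUnion fun m => supp b (y m)).sup id, fun v hv hvK =>
    hy.mem_of_natLt (fun m hm n hn => ?_) hN hv hvK⟩
  exact Finset.le_sup (f := id) (Finset.mem_biUnion.mpr ⟨m, Finset.mem_range.mpr hm, hn⟩)

theorem IWinsF.of_natLt_imp_mem {X Y : Submodule 𝔽 E} {pre : List E} {A : Set (ℕ → E)}
    {K : ℕ} (hK : ∀ v ∈ Y, NatLt b K v → v ∈ X) (h : IWinsF b X pre A) :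
    IWinsF b Y pre A := by
  obtain ⟨σ, hσ⟩ := h
  refine ⟨fun l => σ l + K, fun x hx => ?_⟩
  have hxX : ∀ i, x i ∈ X ∧ x i ≠ 0 ∧ NatLt b (σ (hist x i)) (x i) ∧
      VecLt b (x i) (x (i + 1)) := fun i => by
    obtain ⟨hxY, hx0, hσx, hxx⟩ := hx i
    exact ⟨hK _ hxY (hσx.mono_s12 (Nat.le_add_left K _)), hx0, hσx.mono_s12 (Nat.le_add_right _ K), hxx⟩
  obtain ⟨hσ_mono, hA⟩ := hσ x hxX
  exact ⟨fun i => Nat.add_lt_add_right (hσ_mono i) K, hA⟩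

end BlockSequences

theorem IWinsF_subsetStar_general
    {𝔽 : Type} [Field 𝔽]
    {E : Type} [AddCommGroup E] [Module 𝔽 E]
    (b : Module.Basis ℕ 𝔽 E) (A : Set (ℕ → E)) (X Y : Submodule 𝔽 E)
    (hYX : SubsetStar b Y X) (h : IWinsF b X [] A) :
    IWinsF b Y [] A := by
  obtain ⟨K, hK⟩ := hYX.exists_natLt_imp_mem
  exact h.of_natLt_imp_mem hK

theorem IWinsF_subsetStar
    {𝔽 : Type} [Field 𝔽] [Countable 𝔽]
    {E : Type} [AddCommGroup E] [Module 𝔽 E]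
    (b : Module.Basis ℕ 𝔽 E) (A : Set (ℕ → E)) (X Y : Submodule 𝔽 E)
    (hX : IsBlockSubspace b X) (hY : IsBlockSubspace b Y)
    (hYX : SubsetStar b Y X) (h : IWinsF b X [] A) :
    IWinsF b Y [] A :=
  IWinsF_subsetStar_general b A X Y hYX h
end
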